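/- arXiv:2504.19518 — 7 statements merged into one kernel-verified Lean document; each statement's English description precedes it below -/
import Mathlib

section
/- Let Ω be a real symmetric positive definite n×n matrix, φ ∈ ℝⁿ with φ ≠ 0, μ ∈ [0,1), and m² = 1 + ‖φ‖². Then the directional-forgetting update Ω' = Ω − μ · Ω φ φᵀ Ω / (φᵀΩφ) + φφᵀ/m² satisfies Ω' ≽ (1−μ)Ω in the Loewner order; in particular Ω' is symmetric positive definite. -/
/-!
Write `Ω' - (1 - μ) Ω = μ (Ω - Ω φ φᵀ Ω / (φᵀ Ω φ)) + φ φᵀ / (1 + ‖φ‖²)`. The first bracket is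
positive semidefinite by the Cauchy–Schwarz inequality `(xᵀ Ω φ)² ≤ (xᵀ Ω x)(φᵀ Ω φ)` for the
semi-inner product defined by `Ω`, and the second is a rank-one positive semidefinite matrix.
Adding back the positive definite `(1 - μ) Ω` makes `Ω'` positive definite.
-/

open Matrix

namespace Matrix

variable {ι R 𝕜 : Type*} [Fintype ι]

lemma IsHermitian.dotProduct_mulVec_comm [CommSemiring R] [StarRing R] [TrivialStar R]
    {A : Matrix ι ι R} (hA : A.IsHermitian) (x y : ι → R) :
    y ⬝ᵥ A *ᵥ x = x ⬝ᵥ A *ᵥ y := by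
  rw [dotProduct_mulVec, ← mulVec_transpose, ← conjTranspose_eq_transpose_of_trivial, hA.eq,
    dotProduct_comm]

lemma dotProduct_vecMulVec_self_mulVec [CommSemiring R] (u x : ι → R) :
    x ⬝ᵥ vecMulVec u u *ᵥ x = (x ⬝ᵥ u) ^ 2 := by
  rw [vecMulVec_mulVec, op_smul_eq_smul, dotProduct_smul, smul_eq_mul, dotProduct_comm u, sq]

variable [Field 𝕜] [LinearOrder 𝕜] [IsStrictOrderedRing 𝕜] [StarRing 𝕜] [TrivialStar 𝕜]

lemma PosSemidef.dotProduct_mulVec_sq_le {A : Matrix ι ι 𝕜} (hA : A.PosSemidef) (x y : ι → 𝕜) :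
    (x ⬝ᵥ A *ᵥ y) ^ 2 ≤ (x ⬝ᵥ A *ᵥ x) * (y ⬝ᵥ A *ᵥ y) := by
  classical
  have := (toBilin' A).apply_mul_apply_le_of_forall_zero_le
    (fun z ↦ by simpa [toBilin'_apply'] using hA.dotProduct_mulVec_nonneg z) x y
  simpa only [toBilin'_apply', hA.isHermitian.dotProduct_mulVec_comm y x, ← sq] using this

lemma PosSemidef.sub_smul_vecMulVec_mulVec {A : Matrix ι ι 𝕜} (hA : A.PosSemidef) (v : ι → 𝕜) :
    (A - (v ⬝ᵥ A *ᵥ v)⁻¹ • vecMulVec (A *ᵥ v) (A *ᵥ v)).PosSemidef := by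
  refine .of_dotProduct_mulVec_nonneg ?_ fun x ↦ ?_
  · refine hA.isHermitian.sub (IsHermitian.smul ?_ (IsSelfAdjoint.all _))
    simp [IsHermitian]
  · rw [star_trivial, sub_mulVec, smul_mulVec, dotProduct_sub, dotProduct_smul, smul_eq_mul,
      dotProduct_vecMulVec_self_mulVec, sub_nonneg]
    have hxx : 0 ≤ x ⬝ᵥ A *ᵥ x := by simpa using hA.dotProduct_mulVec_nonneg x
    have hvv : 0 ≤ v ⬝ᵥ A *ᵥ v := by simpa using hA.dotProduct_mulVec_nonneg v
    rcases hvv.eq_or_lt with hv | hv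
    -- `0⁻¹ = 0`, so the correction term vanishes
    · simpa [← hv] using hxx
    · rw [inv_mul_le_iff₀ hv, mul_comm]
      exact hA.dotProduct_mulVec_sq_le x v

end Matrix

theorem directional_forgetting_posDef_general {n : ℕ} (Ω : Matrix (Fin n) (Fin n) ℝ)
    (hΩ : Ω.PosDef) (φ : Fin n → ℝ) (μ : ℝ) (hμ0 : 0 ≤ μ) (hμ1 : μ < 1) :
    Matrix.PosSemidef
      ((Ω - (μ * (φ ⬝ᵥ (Ω *ᵥ φ))⁻¹) • vecMulVec (Ω *ᵥ φ) (Ω *ᵥ φ)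
          + (1 + φ ⬝ᵥ φ)⁻¹ • vecMulVec φ φ) - (1 - μ) • Ω) ∧
    Matrix.PosDef
      (Ω - (μ * (φ ⬝ᵥ (Ω *ᵥ φ))⁻¹) • vecMulVec (Ω *ᵥ φ) (Ω *ᵥ φ)
          + (1 + φ ⬝ᵥ φ)⁻¹ • vecMulVec φ φ) := by
  set Ω' := Ω - (μ * (φ ⬝ᵥ (Ω *ᵥ φ))⁻¹) • vecMulVec (Ω *ᵥ φ) (Ω *ᵥ φ)
    + (1 + φ ⬝ᵥ φ)⁻¹ • vecMulVec φ φ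
  have hsplit : Ω' - (1 - μ) • Ω = μ • (Ω - (φ ⬝ᵥ Ω *ᵥ φ)⁻¹ • vecMulVec (Ω *ᵥ φ) (Ω *ᵥ φ))
      + (1 + φ ⬝ᵥ φ)⁻¹ • vecMulVec φ φ := by
    simp only [Ω', smul_sub, mul_smul, sub_smul, one_smul]
    abel
  have hm : 0 ≤ (1 + φ ⬝ᵥ φ)⁻¹ :=
    inv_nonneg.mpr (add_nonneg zero_le_one (by simpa using dotProduct_self_star_nonneg φ))
  have hgap : (Ω' - (1 - μ) • Ω).PosSemidef := by
    rw [hsplit]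
    exact ((hΩ.posSemidef.sub_smul_vecMulVec_mulVec φ).smul hμ0).add
      ((posSemidef_vecMulVec_self_star φ).smul hm)
  refine ⟨hgap, ?_⟩
  simpa using (hΩ.smul (sub_pos.mpr hμ1)).add_posSemidef hgap

/-- Directional-forgetting update of a symmetric positive definite matrix:
`Ω' = Ω − μ · Ω φ φᵀ Ω / (φᵀ Ω φ) + φ φᵀ / (1 + ‖φ‖²)` satisfies `Ω' ≽ (1 − μ) Ω`
in the Loewner order; in particular `Ω'` is symmetric positive definite. -/
theorem directional_forgetting_posDef {n : ℕ} (Ω : Matrix (Fin n) (Fin n) ℝ)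
    (hΩ : Ω.PosDef) (φ : Fin n → ℝ) (hφ : φ ≠ 0) (μ : ℝ) (hμ0 : 0 ≤ μ) (hμ1 : μ < 1) :
    Matrix.PosSemidef
      ((Ω - (μ * (φ ⬝ᵥ (Ω *ᵥ φ))⁻¹) • vecMulVec (Ω *ᵥ φ) (Ω *ᵥ φ)
          + (1 + φ ⬝ᵥ φ)⁻¹ • vecMulVec φ φ) - (1 - μ) • Ω) ∧
    Matrix.PosDef
      (Ω - (μ * (φ ⬝ᵥ (Ω *ᵥ φ))⁻¹) • vecMulVec (Ω *ᵥ φ) (Ω *ᵥ φ)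
          + (1 + φ ⬝ᵥ φ)⁻¹ • vecMulVec φ φ) :=
  directional_forgetting_posDef_general Ω hΩ φ μ hμ0 hμ1
end

section
/- Let θ ∈ ℝⁿ and φ(k) ∈ ℝⁿ be given, with outputs y(k+1) = φ(k)ᵀθ, let μ ∈ [0,1), m(k)² = 1 + ‖φ(k)‖², and let Ω(k) ∈ ℝ^{n×n} and M(k) ∈ ℝⁿ be generated by Algorithm 1: Ω(0) = 0, M(0) = 0; if rank(Ω(k) + φ(k)φ(k)ᵀ/m(k)²) > rank(Ω(k)) then Ω(k+1) = Ω(k) + φ(k)φ(k)ᵀ/m(k)² and M(k+1) = M(k) + φ(k)y(k+1)/m(k)²; otherwise Ω(k+1) = Ω(k) − μ·Ω(k)φ(k)φ(k)ᵀΩ(k)/(φ(k)ᵀΩ(k)φ(k)) + φ(k)φ(k)ᵀ/m(k)² and M(k+1) = M(k) − μ·Ω(k)φ(k)φ(k)ᵀM(k)/(φ(k)ᵀΩ(k)φ(k)) + φ(k)y(k+1)/m(k)² (with the convention that the forgetting terms are 0 when φ(k)ᵀΩ(k)φ(k) = 0). Then M(k) = Ω(k)θ for every k ≥ 0; consequently,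 for any θ̂ ∈ ℝⁿ, Ω(k)θ̂ − M(k) = Ω(k)(θ̂ − θ). -/
open Matrix

lemma vecMulVec_transpose' {n : ℕ} (u v : Fin n → ℝ) :
    (vecMulVec u v)ᵀ = vecMulVec v u := by
  ext i j
  simp [vecMulVec, mul_comm]

lemma vecMulVec_mulVec' {n : ℕ} (u v x : Fin n → ℝ) :
    vecMulVec u v *ᵥ x = (v ⬝ᵥ x) • u := by
  ext i
  simp [vecMulVec, mulVec, dotProduct, Finset.mul_sum, mul_assoc, mul_comm, mul_left_comm]

/-- For the linear parametric model `y(k+1) = φ(k)ᵀ θ`, the auxiliary vector `M(k)`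
generated by Algorithm 1 satisfies `M(k) = Ω(k) θ` for all `k`; consequently the
augmented identification error satisfies `Ω(k) θ̂ − M(k) = Ω(k)(θ̂ − θ)`. -/
theorem auxiliary_vector_eq {n : ℕ}
    (θ : Fin n → ℝ) (φ : ℕ → (Fin n → ℝ)) (y : ℕ → ℝ)
    (hy : ∀ k : ℕ, y (k + 1) = φ k ⬝ᵥ θ)
    (μ : ℝ) (hμ0 : 0 ≤ μ) (hμ1 : μ < 1)
    (Ω : ℕ → Matrix (Fin n) (Fin n) ℝ) (M : ℕ → (Fin n → ℝ))
    (hΩ0 : Ω 0 = 0) (hM0 : M 0 = 0)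
    (hrec : ∀ k : ℕ,
      if (Ω k).rank < (Ω k + (1 + φ k ⬝ᵥ φ k)⁻¹ • vecMulVec (φ k) (φ k)).rank then
        Ω (k + 1) = Ω k + (1 + φ k ⬝ᵥ φ k)⁻¹ • vecMulVec (φ k) (φ k) ∧
        M (k + 1) = M k + ((1 + φ k ⬝ᵥ φ k)⁻¹ * y (k + 1)) • φ k
      else
        Ω (k + 1) = Ω k
          - (μ * (φ k ⬝ᵥ (Ω k *ᵥ φ k))⁻¹) • vecMulVec (Ω k *ᵥ φ k) (Ω k *ᵥ φ k)
          + (1 + φ k ⬝ᵥ φ k)⁻¹ • vecMulVec (φ k) (φ k) ∧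
        M (k + 1) = M k
          - (μ * (φ k ⬝ᵥ (Ω k *ᵥ φ k))⁻¹ * (φ k ⬝ᵥ M k)) • (Ω k *ᵥ φ k)
          + ((1 + φ k ⬝ᵥ φ k)⁻¹ * y (k + 1)) • φ k) :
    ∀ k : ℕ, M k = Ω k *ᵥ θ ∧
      ∀ θhat : Fin n → ℝ, Ω k *ᵥ θhat - M k = Ω k *ᵥ (θhat - θ) := by
  -- strengthen: Ω k is symmetric and M k = Ω k *ᵥ θ
  have key : ∀ k : ℕ, (Ω k)ᵀ = Ω k ∧ M k = Ω k *ᵥ θ := by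
    intro k
    induction k with
    | zero => simp [hΩ0, hM0]
    | succ k ih =>
      obtain ⟨hsym, hM⟩ := ih
      have hrk := hrec k
      split_ifs at hrk with h
      · obtain ⟨hΩ', hM'⟩ := hrk
        constructor
        · rw [hΩ', transpose_add, transpose_smul, vecMulVec_transpose', hsym]
        · rw [hΩ', hM', hM, add_mulVec, smul_mulVec, vecMulVec_mulVec', hy,
            smul_smul]
      · obtain ⟨hΩ', hM'⟩ := hrk
        have hdot : (Ω k *ᵥ φ k) ⬝ᵥ θ = φ k ⬝ᵥ M k := by
          rw [hM, dotProduct_mulVec, ← mulVec_transpose, hsym]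
        constructor
        · rw [hΩ', transpose_add, transpose_sub, transpose_smul, transpose_smul,
            vecMulVec_transpose', vecMulVec_transpose', hsym]
        · rw [hΩ', hM', hM, add_mulVec, sub_mulVec, smul_mulVec,
            smul_mulVec, vecMulVec_mulVec', vecMulVec_mulVec', hdot, hy,
            smul_smul, smul_smul, ← hM]
  intro k
  refine ⟨(key k).2, fun θhat => ?_⟩
  rw [(key k).2, mulVec_sub]
end

section
/- Let P be a real symmetric positive definite n×n matrix, Ω a real symmetric n×n matrix, λ ∈ (0,1), and N = λ·I + Ω P Ω. Then P' = (1/λ)·(P − P Ω N⁻¹ Ω P) is symmetric positive definite. -/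
open Matrix

namespace Matrix.PosDef

variable {K : Type*} [Field K] [PartialOrder K] [StarRing K] [AddLeftMono K]
  {m n : Type*} [Fintype m] [Fintype n] [DecidableEq m] [DecidableEq n]

/-- By the Woodbury identity this matrix is `(P⁻¹ + Bᴴ R⁻¹ B)⁻¹`, the inverse of a positive
definite matrix. -/
theorem sub_mul_inv_add_mul_mul {P : Matrix n n K} {R : Matrix m m K} (hP : P.PosDef)
    (hR : R.PosDef) (B : Matrix m n K) :
    (P - P * Bᴴ * (R + B * P * Bᴴ)⁻¹ * B * P).PosDef := by
  have hsum : (R + B * P * Bᴴ).PosDef :=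
    hR.add_posSemidef (hP.posSemidef.mul_mul_conjTranspose_same B)
  have hinv_sum : (P⁻¹ + Bᴴ * R⁻¹ * B).PosDef :=
    hP.inv.add_posSemidef (hR.inv.posSemidef.conjTranspose_mul_mul_same B)
  have hP' : P⁻¹⁻¹ = P := nonsing_inv_nonsing_inv P ((isUnit_iff_isUnit_det P).mp hP.isUnit)
  have hR' : R⁻¹⁻¹ = R := nonsing_inv_nonsing_inv R ((isUnit_iff_isUnit_det R).mp hR.isUnit)
  have woodbury :
      (P⁻¹ + Bᴴ * R⁻¹ * B)⁻¹ = P - P * Bᴴ * (R + B * P * Bᴴ)⁻¹ * B * P := by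
    simpa only [hP', hR'] using add_mul_mul_inv_eq_sub P⁻¹ Bᴴ R⁻¹ B hP.inv.isUnit
      hR.inv.isUnit (by rw [hP', hR']; exact hsum.isUnit)
  exact woodbury ▸ hinv_sum.inv

end Matrix.PosDef

theorem covariance_update_posDef_general {n : ℕ} (P Ω : Matrix (Fin n) (Fin n) ℝ)
    (hP : P.PosDef) (hΩ : Ω.IsHermitian) (lam : ℝ) (hlam0 : 0 < lam)
    (N : Matrix (Fin n) (Fin n) ℝ)
    (hN : N = lam • (1 : Matrix (Fin n) (Fin n) ℝ) + Ω * P * Ω) :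
    (lam⁻¹ • (P - P * Ω * N⁻¹ * Ω * P)).PosDef := by
  have hupdate := hP.sub_mul_inv_add_mul_mul (PosDef.one.smul hlam0) Ω
  rw [hΩ.eq, ← hN] at hupdate
  exact hupdate.smul (inv_pos.mpr hlam0)

/-- If `P` is symmetric positive definite, `Ω` is symmetric, `λ ∈ (0,1)`, and
`N = λ I + Ω P Ω`, then `P' = (1/λ)(P − P Ω N⁻¹ Ω P)` is symmetric positive definite. -/
theorem covariance_update_posDef {n : ℕ} (P Ω : Matrix (Fin n) (Fin n) ℝ)
    (hP : P.PosDef) (hΩ : Ω.IsHermitian) (lam : ℝ) (hlam0 : 0 < lam) (hlam1 : lam < 1)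
    (N : Matrix (Fin n) (Fin n) ℝ)
    (hN : N = lam • (1 : Matrix (Fin n) (Fin n) ℝ) + Ω * P * Ω) :
    (lam⁻¹ • (P - P * Ω * N⁻¹ * Ω * P)).PosDef :=
  covariance_update_posDef_general P Ω hP hΩ lam hlam0 N hN
end

section
/- Let P be a real symmetric positive definite n×n matrix, Ω a real symmetric n×n matrix, λ ∈ (0,1), N = λ·I + Ω P Ω, and P' = (1/λ)·(P − P Ω N⁻¹ Ω P). Then the corresponding information matrices R = P⁻¹ and R' = P'⁻¹ satisfy the exponential-forgetting recursion R' = λ·R + Ω². -/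
/-!
The update `P ↦ P'` is the Woodbury form of the inverse of `λ P⁻¹ + Ω Ω`: multiplying
`P − P Ω N⁻¹ Ω P` by `λ P⁻¹ + Ω Ω` and using `Ω P (λ P⁻¹ + Ω Ω) = N Ω` collapses the product
to `λ • 1`. The only analytic input is that `N = λ I + Ωᵀ P Ω` is positive definite, hence invertible.
-/

open Matrix

namespace Matrix

theorem woodbury_mul_smul_inv_add_mul {m n α : Type*} [Fintype m] [Fintype n] [DecidableEq m]
    [DecidableEq n] [CommRing α]
    {P : Matrix n n α} {U : Matrix n m α} {V : Matrix m n α} {N : Matrix m m α} {c : α}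
    (hP : IsUnit P.det) (hN : IsUnit N.det) (hN_eq : N = c • 1 + V * P * U) :
    (P - P * U * N⁻¹ * V * P) * (c • P⁻¹ + U * V) = c • 1 := by
  have hPP : P * (c • P⁻¹ + U * V) = c • 1 + P * U * V := by
    rw [Matrix.mul_add, Matrix.mul_smul, mul_nonsing_inv P hP, Matrix.mul_assoc]
  have hVP : V * P * (c • P⁻¹ + U * V) = N * V := by
    rw [Matrix.mul_assoc, hPP, hN_eq, Matrix.mul_add, Matrix.add_mul, Matrix.mul_smul,
      Matrix.smul_mul, Matrix.mul_one, Matrix.one_mul]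
    simp only [Matrix.mul_assoc]
  calc (P - P * U * N⁻¹ * V * P) * (c • P⁻¹ + U * V)
      = P * (c • P⁻¹ + U * V) - P * U * (N⁻¹ * (V * P * (c • P⁻¹ + U * V))) := by
        simp only [Matrix.sub_mul, Matrix.mul_assoc]
    _ = c • 1 := by
        rw [hVP, ← Matrix.mul_assoc N⁻¹, nonsing_inv_mul N hN, Matrix.one_mul, hPP,
          add_sub_cancel_right]

open scoped ComplexOrder in
theorem posDef_smul_one_add_conjTranspose_mul_mul {m n 𝕜 : Type*} [Fintype m] [Fintype n]
    [DecidableEq m] [RCLike 𝕜]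
    {P : Matrix n n 𝕜} (hP : P.PosSemidef) (B : Matrix n m 𝕜) {c : 𝕜} (hc : 0 < c) :
    (c • 1 + Bᴴ * P * B).PosDef :=
  (PosDef.one.smul hc).add_posSemidef (hP.conjTranspose_mul_mul_same B)

end Matrix

theorem information_matrix_recursion_general {n : ℕ} (P Ω : Matrix (Fin n) (Fin n) ℝ)
    (hP : P.PosDef) (hΩ : Ω.IsHermitian) (lam : ℝ) (hlam0 : 0 < lam)
    (N P' : Matrix (Fin n) (Fin n) ℝ)
    (hN : N = lam • (1 : Matrix (Fin n) (Fin n) ℝ) + Ω * P * Ω)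
    (hP' : P' = lam⁻¹ • (P - P * Ω * N⁻¹ * Ω * P)) :
    P'⁻¹ = lam • P⁻¹ + Ω * Ω := by
  have hN_pd : N.PosDef := by
    simpa only [hN, hΩ.eq] using posDef_smul_one_add_conjTranspose_mul_mul hP.posSemidef Ω hlam0
  have hP_det : IsUnit P.det := (isUnit_iff_isUnit_det P).mp hP.isUnit
  have hN_det : IsUnit N.det := (isUnit_iff_isUnit_det N).mp hN_pd.isUnit
  apply inv_eq_right_inv
  rw [hP', smul_mul_assoc, woodbury_mul_smul_inv_add_mul hP_det hN_det hN, smul_smul,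
    inv_mul_cancel₀ hlam0.ne', one_smul]

/-- With `N = λ I + Ω P Ω` and `P' = (1/λ)(P − P Ω N⁻¹ Ω P)`, the information matrices
`R = P⁻¹` and `R' = P'⁻¹` satisfy the exponential-forgetting recursion `R' = λ R + Ω²`. -/
theorem information_matrix_recursion {n : ℕ} (P Ω : Matrix (Fin n) (Fin n) ℝ)
    (hP : P.PosDef) (hΩ : Ω.IsHermitian) (lam : ℝ) (hlam0 : 0 < lam) (hlam1 : lam < 1)
    (N P' : Matrix (Fin n) (Fin n) ℝ)
    (hN : N = lam • (1 : Matrix (Fin n) (Fin n) ℝ) + Ω * P * Ω)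
    (hP' : P' = lam⁻¹ • (P - P * Ω * N⁻¹ * Ω * P)) :
    P'⁻¹ = lam • P⁻¹ + Ω * Ω :=
  information_matrix_recursion_general P Ω hP hΩ lam hlam0 N P' hN hP'
end

section
/- Let R(k) be a sequence of real symmetric positive semidefinite n×n matrices, λ ∈ (0,1), σ ≥ 0 and δ ≥ 0 natural numbers, and α > 0 such that R(k+1) ≽ λ·R(k) for all k with σ ≤ k < σ+δ, and Σ_{k=σ}^{σ+δ} R(k) ≽ α·I. Then R(σ+δ) ≽ ((1/λ − 1)/(1/λ^{δ+1} − 1))·α·I when δ ≥ 1, and R(σ) ≽ α·I when δ = 0; in particular R(σ+δ) is positive definite. -/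
open Matrix Finset

/-! Dividing the step condition by `λ` gives `R k ≼ λ⁻¹ R (k+1)`, so iterating,
`R (σ+i) ≼ λ^{-(δ-i)} R (σ+δ)` for `i ≤ δ`. Summing over the window,
`α I ≼ ∑ R k ≼ S R (σ+δ)` with `S = ∑_{i=0}^{δ} λ^{-i}`, and `S⁻¹` is the constant of the
statement by the geometric series formula. Since `S⁻¹ α > 0`, `R (σ+δ)` is positive definite. -/

section Decay

variable {𝕜 M : Type*} [Semiring 𝕜] [PartialOrder 𝕜] [IsOrderedRing 𝕜]
  [AddCommMonoid M] [PartialOrder M] [Module 𝕜 M] [PosSMulMono 𝕜 M] {f : ℕ → M} {μ : 𝕜}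

theorem le_pow_smul_of_le_smul_succ (hμ : 0 ≤ μ) (m : ℕ) :
    ∀ {j : ℕ}, (∀ k, m ≤ k → k < m + j → f k ≤ μ • f (k + 1)) → f m ≤ μ ^ j • f (m + j)
  | 0, _ => by simp
  | j + 1, h => calc
      f m ≤ μ ^ j • f (m + j) :=
        le_pow_smul_of_le_smul_succ hμ m fun k hmk hk => h k hmk (by omega)
      _ ≤ μ ^ j • μ • f (m + j + 1) :=
        smul_le_smul_of_nonneg_left (h (m + j) (by omega) (by omega)) (pow_nonneg hμ j)
      _ = μ ^ (j + 1) • f (m + (j + 1)) := by rw [← mul_smul, ← pow_succ, add_assoc]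

theorem sum_Icc_le_geom_sum_smul [IsOrderedAddMonoid M] (hμ : 0 ≤ μ) {a d : ℕ}
    (h : ∀ k, a ≤ k → k < a + d → f k ≤ μ • f (k + 1)) :
    ∑ k ∈ Icc a (a + d), f k ≤ (∑ i ∈ range (d + 1), μ ^ i) • f (a + d) := by
  have hterm : ∀ i ∈ range (d + 1), f (a + i) ≤ μ ^ (d - i) • f (a + d) := by
    intro i hi
    have hi := mem_range.1 hi
    have hid : a + i + (d - i) = a + d := by omega
    simpa only [hid] using le_pow_smul_of_le_smul_succ hμ (a + i) (j := d - i)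
      fun k hk hk' => h k (by omega) (by omega)
  calc ∑ k ∈ Icc a (a + d), f k = ∑ i ∈ range (d + 1), f (a + i) := by
        rw [← Ico_add_one_right_eq_Icc, sum_Ico_eq_sum_range]
        congr 2
        omega
    _ ≤ ∑ i ∈ range (d + 1), μ ^ (d - i) • f (a + d) := sum_le_sum hterm
    _ = (∑ i ∈ range (d + 1), μ ^ i) • f (a + d) := by
        rw [← sum_smul, ← sum_range_reflect (μ ^ ·)]
        simp

end Decay

open scoped MatrixOrder ComplexOrder

theorem Matrix.posDef_of_smul_one_le {𝕜 n : Type*} [RCLike 𝕜] [Fintype n] [DecidableEq n]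
    {A : Matrix n n 𝕜} {c : ℝ} (hc : 0 < c) (h : c • (1 : Matrix n n 𝕜) ≤ A) : A.PosDef := by
  simpa using PosDef.posSemidef_add (le_iff.1 h) (PosDef.one.smul hc)

theorem information_matrix_lower_bound_general {n : ℕ}
    (R : ℕ → Matrix (Fin n) (Fin n) ℝ)
    (lam : ℝ) (hlam0 : 0 < lam) (hlam1 : lam < 1)
    (σ δ : ℕ) (α : ℝ) (hα : 0 < α)
    (hstep : ∀ k, σ ≤ k → k < σ + δ → Matrix.PosSemidef (R (k + 1) - lam • R k))
    (hsum : Matrix.PosSemidef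
      ((∑ k ∈ Finset.Icc σ (σ + δ), R k) - α • (1 : Matrix (Fin n) (Fin n) ℝ))) :
    (1 ≤ δ → Matrix.PosSemidef
      (R (σ + δ) - ((1 / lam - 1) / (1 / lam ^ (δ + 1) - 1) * α)
        • (1 : Matrix (Fin n) (Fin n) ℝ))) ∧
    (δ = 0 → Matrix.PosSemidef (R σ - α • (1 : Matrix (Fin n) (Fin n) ℝ))) ∧
    (R (σ + δ)).PosDef := by
  have hdecay (k : ℕ) (h₁ : σ ≤ k) (h₂ : k < σ + δ) : R k ≤ lam⁻¹ • R (k + 1) :=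
    (le_inv_smul_iff_of_pos hlam0).2 (hstep k h₁ h₂)
  set S := ∑ i ∈ range (δ + 1), lam⁻¹ ^ i with hS
  have hS_inv : S⁻¹ = (1 / lam - 1) / (1 / lam ^ (δ + 1) - 1) := by
    rw [hS, geom_sum_eq (inv_ne_one.2 hlam1.ne), inv_div, inv_pow, one_div, one_div]
  have hS_pos : 0 < S := sum_pos (fun i _ => by positivity) nonempty_range_add_one
  have hbound : (S⁻¹ * α) • (1 : Matrix (Fin n) (Fin n) ℝ) ≤ R (σ + δ) := by
    rw [mul_smul, inv_smul_le_iff_of_pos hS_pos]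
    exact le_trans (le_iff.2 hsum) (sum_Icc_le_geom_sum_smul (by positivity) hdecay)
  refine ⟨fun _ => hS_inv ▸ le_iff.1 hbound, fun hδ => ?_,
    posDef_of_smul_one_le (by positivity) hbound⟩
  subst hδ
  simpa using hsum

/-- Lower bound on the information matrix: if `R(k+1) ≽ λ R(k)` on the window
`[σ, σ+δ)` and `∑_{k=σ}^{σ+δ} R(k) ≽ α I`, then
`R(σ+δ) ≽ ((1/λ − 1)/(1/λ^{δ+1} − 1)) α I` when `δ ≥ 1`, and `R(σ) ≽ α I` when
`δ = 0`; in particular `R(σ+δ)` is positive definite. -/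
theorem information_matrix_lower_bound {n : ℕ}
    (R : ℕ → Matrix (Fin n) (Fin n) ℝ) (hpsd : ∀ k, (R k).PosSemidef)
    (lam : ℝ) (hlam0 : 0 < lam) (hlam1 : lam < 1)
    (σ δ : ℕ) (α : ℝ) (hα : 0 < α)
    (hstep : ∀ k, σ ≤ k → k < σ + δ → Matrix.PosSemidef (R (k + 1) - lam • R k))
    (hsum : Matrix.PosSemidef
      ((∑ k ∈ Finset.Icc σ (σ + δ), R k) - α • (1 : Matrix (Fin n) (Fin n) ℝ))) :
    (1 ≤ δ → Matrix.PosSemidef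
      (R (σ + δ) - ((1 / lam - 1) / (1 / lam ^ (δ + 1) - 1) * α)
        • (1 : Matrix (Fin n) (Fin n) ℝ))) ∧
    (δ = 0 → Matrix.PosSemidef (R σ - α • (1 : Matrix (Fin n) (Fin n) ℝ))) ∧
    (R (σ + δ)).PosDef :=
  information_matrix_lower_bound_general R lam hlam0 hlam1 σ δ α hα hstep hsum
end

section
/- (Theorem 2) Let λ ∈ (0,1), let Ω(k) be a sequence of real symmetric positive semidefinite n×n matrices, and suppose there exist k_e ∈ ℕ and α_Ω > 0, β_Ω > 0 with α_Ω·I ≼ Ω(k) ≼ β_Ω·I for all k ≥ k_e. Let R(k) be a sequence of real symmetric matrices with R(0) positive semidefinite satisfying R(k+1) = λ·R(k) + Ω(k)² for all k ≥ 0. Then there exist α > 0 and β > 0 (for instance α = α_Ω² and β = β_Ω²) such that α·I ≼ R(k) ≼ R(0) + (1/(1−λ))·β·I for all k ≥ k_e + 1; in particular R(k) is positive definite and uniformly bounded for all such k. -/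
/-!
In the Loewner order, `R (k + 1) = λ R k + Ω k²` is a discounted sum of the nonnegative
inputs `Ω k²`, so `R (k + 1) ≥ Ω k²` and, if every input is at most `β I`,
`R k ≤ R 0 + β I / (1 - λ)`.
The input bounds come from squaring `αΩ I ≤ Ω k ≤ βΩ I`, which is legitimate because `Ω k`
commutes with the identity: `b² - a² = (b - a)(b + a)` is then a product of commuting
nonnegative elements.
-/

open Matrix
open scoped MatrixOrder

section StarOrdered

variable {A : Type*} [Ring A] [PartialOrder A] [StarRing A] [StarOrderedRing A]
  [TopologicalSpace A] [Algebra ℝ A] [NonUnitalContinuousFunctionalCalculus ℝ A IsSelfAdjoint]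
  [NonnegSpectrumClass ℝ A]

theorem Commute.mul_self_le_mul_self {a b : A} (h : Commute a b) (ha : 0 ≤ a) (hab : a ≤ b) :
    a * a ≤ b * b := by
  rw [← sub_nonneg, h.symm.mul_self_sub_mul_self_eq']
  exact Commute.mul_nonneg (sub_nonneg.2 hab) (add_nonneg (ha.trans hab) ha)
    (((Commute.refl b).add_right h.symm).sub_left (h.add_right (Commute.refl a)))

theorem sq_smul_one_le_mul_self [PosSMulMono ℝ A] {a : A} {r : ℝ} (hr : 0 ≤ r)
    (h : r • 1 ≤ a) :
    r ^ 2 • (1 : A) ≤ a * a := by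
  simpa [sq, smul_smul] using
    ((Commute.one_left a).smul_left r).mul_self_le_mul_self (smul_nonneg hr zero_le_one) h

theorem mul_self_le_sq_smul_one {a : A} {r : ℝ} (ha : 0 ≤ a) (h : a ≤ r • 1) :
    a * a ≤ r ^ 2 • (1 : A) := by
  simpa [sq, smul_smul] using ((Commute.one_right a).smul_right r).mul_self_le_mul_self ha h

end StarOrdered

namespace Matrix

variable {n : Type*} [DecidableEq n]

theorem PosSemidef.le_trace_smul_one [Fintype n] {A : Matrix n n ℝ} (hA : A.PosSemidef) :
    A ≤ A.trace • 1 := by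
  rw [← Algebra.algebraMap_eq_smul_one]
  refine le_algebraMap_of_spectrum_le ?_ hA.1.isSelfAdjoint
  rw [hA.1.spectrum_real_eq_range_eigenvalues, hA.1.trace_eq_sum_eigenvalues]
  rintro _ ⟨i, rfl⟩
  exact Finset.single_le_sum (fun j _ ↦ hA.eigenvalues_nonneg j) (Finset.mem_univ i)

theorem PosDef.of_smul_one_le {A : Matrix n n ℝ} {r : ℝ} (hr : 0 < r) (h : r • 1 ≤ A) :
    A.PosDef :=
  sub_add_cancel A (r • 1) ▸ PosDef.posSemidef_add (le_iff.mp h) (PosDef.one.smul hr)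

end Matrix

section DiscountedRecursion

variable {M : Type*} [AddCommGroup M] [PartialOrder M] [IsOrderedAddMonoid M] [Module ℝ M]
  [PosSMulMono ℝ M] {lam : ℝ} {R Q : ℕ → M}

theorem discountedRec_nonneg (hlam : 0 ≤ lam) (hrec : ∀ k, R (k + 1) = lam • R k + Q k)
    (hR0 : 0 ≤ R 0) (hQ : ∀ k, 0 ≤ Q k) (k : ℕ) : 0 ≤ R k := by
  induction k with
  | zero => exact hR0
  | succ k ih => rw [hrec]; exact add_nonneg (smul_nonneg hlam ih) (hQ k)

theorem le_discountedRec_succ (hlam : 0 ≤ lam) (hrec : ∀ k, R (k + 1) = lam • R k + Q k)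
    (hR0 : 0 ≤ R 0) (hQ : ∀ k, 0 ≤ Q k) (k : ℕ) : Q k ≤ R (k + 1) := by
  rw [hrec]
  exact le_add_of_nonneg_left (smul_nonneg hlam (discountedRec_nonneg hlam hrec hR0 hQ k))

theorem discountedRec_le (hlam0 : 0 ≤ lam) (hlam1 : lam < 1)
    (hrec : ∀ k, R (k + 1) = lam • R k + Q k) (hR0 : 0 ≤ R 0) {c : M} (hc : 0 ≤ c)
    (hQ : ∀ k, Q k ≤ c) (k : ℕ) : R k ≤ R 0 + (1 / (1 - lam)) • c := by
  have hs : lam * (1 / (1 - lam)) + 1 = 1 / (1 - lam) := by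
    field_simp [(sub_pos.2 hlam1).ne']
    ring
  induction k with
  | zero => exact le_add_of_nonneg_right (smul_nonneg (one_div_pos.2 (sub_pos.2 hlam1)).le hc)
  | succ k ih =>
    calc R (k + 1) ≤ lam • (R 0 + (1 / (1 - lam)) • c) + c := by
          rw [hrec]; exact add_le_add (smul_le_smul_of_nonneg_left ih hlam0) (hQ k)
      _ = R 0 + (1 / (1 - lam)) • c - (1 - lam) • R 0 := by
          linear_combination (norm := module) hs • c
      _ ≤ R 0 + (1 / (1 - lam)) • c :=
          sub_le_self _ (smul_nonneg (sub_nonneg.2 hlam1.le) hR0)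

end DiscountedRecursion

theorem information_matrix_bounds_general {n : ℕ}
    (lam : ℝ) (hlam0 : 0 < lam) (hlam1 : lam < 1)
    (Ω : ℕ → Matrix (Fin n) (Fin n) ℝ) (hΩ : ∀ k, (Ω k).PosSemidef)
    (k_e : ℕ) (αΩ βΩ : ℝ) (hαΩ : 0 < αΩ) (hβΩ : 0 < βΩ)
    (hlow : ∀ k ≥ k_e, Matrix.PosSemidef (Ω k - αΩ • (1 : Matrix (Fin n) (Fin n) ℝ)))
    (hup : ∀ k ≥ k_e, Matrix.PosSemidef (βΩ • (1 : Matrix (Fin n) (Fin n) ℝ) - Ω k))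
    (R : ℕ → Matrix (Fin n) (Fin n) ℝ)
    (hR0 : (R 0).PosSemidef)
    (hrec : ∀ k : ℕ, R (k + 1) = lam • R k + Ω k * Ω k) :
    ∃ α β : ℝ, 0 < α ∧ 0 < β ∧ ∀ k ≥ k_e + 1,
      Matrix.PosSemidef (R k - α • (1 : Matrix (Fin n) (Fin n) ℝ)) ∧
      Matrix.PosSemidef
        ((R 0 + (1 / (1 - lam)) • β • (1 : Matrix (Fin n) (Fin n) ℝ)) - R k) ∧
      (R k).PosDef := by
  have hsq : ∀ k, 0 ≤ Ω k * Ω k := fun k ↦ (hΩ k).1.isSelfAdjoint.mul_self_nonneg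
  have htrace : ∀ k, 0 ≤ (Ω k * Ω k).trace := fun k ↦ (hsq k).posSemidef.trace_nonneg
  -- nothing uniform is assumed before `k_e`: bound those finitely many `Ω k²` by their traces
  set β := βΩ ^ 2 + ∑ k ∈ Finset.range k_e, (Ω k * Ω k).trace
  have hsum : 0 ≤ ∑ k ∈ Finset.range k_e, (Ω k * Ω k).trace :=
    Finset.sum_nonneg fun k _ ↦ htrace k
  have hβ : 0 < β := add_pos_of_pos_of_nonneg (pow_pos hβΩ 2) hsum
  have hsq_le : ∀ k, Ω k * Ω k ≤ β • 1 := by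
    intro k
    rcases le_or_gt k_e k with hk | hk
    · calc Ω k * Ω k ≤ βΩ ^ 2 • 1 := mul_self_le_sq_smul_one (hΩ k).nonneg (hup k hk)
        _ ≤ β • 1 := by gcongr; exact le_add_of_nonneg_right hsum
    · calc Ω k * Ω k ≤ (Ω k * Ω k).trace • 1 := (hsq k).posSemidef.le_trace_smul_one
        _ ≤ β • 1 := by
          gcongr
          exact (Finset.single_le_sum (fun j _ ↦ htrace j) (Finset.mem_range.2 hk)).trans
            (le_add_of_nonneg_left (sq_nonneg βΩ))
  refine ⟨αΩ ^ 2, β, by positivity, hβ, fun k hk ↦ ?_⟩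
  obtain ⟨m, rfl⟩ : ∃ m, k = m + 1 := ⟨k - 1, by omega⟩
  have hlower : αΩ ^ 2 • (1 : Matrix (Fin n) (Fin n) ℝ) ≤ R (m + 1) :=
    (sq_smul_one_le_mul_self hαΩ.le (hlow m (by omega))).trans
      (le_discountedRec_succ hlam0.le hrec hR0.nonneg hsq m)
  exact ⟨hlower, discountedRec_le hlam0.le hlam1 hrec hR0.nonneg (smul_nonneg hβ.le zero_le_one)
    hsq_le _, PosDef.of_smul_one_le (by positivity) hlower⟩

/-- (Theorem 2) Boundedness of the information matrix: if `α_Ω I ≼ Ω(k) ≼ β_Ω I` for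
`k ≥ k_e` and `R(k+1) = λ R(k) + Ω(k)²` with `R(0)` positive semidefinite, then there
exist `α > 0` and `β > 0` (e.g. `α = α_Ω²`, `β = β_Ω²`) with
`α I ≼ R(k) ≼ R(0) + (1/(1−λ)) β I` for all `k ≥ k_e + 1`; in particular `R(k)` is
positive definite and uniformly bounded for all such `k`. -/
theorem information_matrix_bounds {n : ℕ}
    (lam : ℝ) (hlam0 : 0 < lam) (hlam1 : lam < 1)
    (Ω : ℕ → Matrix (Fin n) (Fin n) ℝ) (hΩ : ∀ k, (Ω k).PosSemidef)
    (k_e : ℕ) (αΩ βΩ : ℝ) (hαΩ : 0 < αΩ) (hβΩ : 0 < βΩ)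
    (hlow : ∀ k ≥ k_e, Matrix.PosSemidef (Ω k - αΩ • (1 : Matrix (Fin n) (Fin n) ℝ)))
    (hup : ∀ k ≥ k_e, Matrix.PosSemidef (βΩ • (1 : Matrix (Fin n) (Fin n) ℝ) - Ω k))
    (R : ℕ → Matrix (Fin n) (Fin n) ℝ) (hRsym : ∀ k, (R k).IsHermitian)
    (hR0 : (R 0).PosSemidef)
    (hrec : ∀ k : ℕ, R (k + 1) = lam • R k + Ω k * Ω k) :
    ∃ α β : ℝ, 0 < α ∧ 0 < β ∧ ∀ k ≥ k_e + 1,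
      Matrix.PosSemidef (R k - α • (1 : Matrix (Fin n) (Fin n) ℝ)) ∧
      Matrix.PosSemidef
        ((R 0 + (1 / (1 - lam)) • β • (1 : Matrix (Fin n) (Fin n) ℝ)) - R k) ∧
      (R k).PosDef :=
  information_matrix_bounds_general lam hlam0 hlam1 Ω hΩ k_e αΩ βΩ hαΩ hβΩ hlow hup R hR0 hrec
end

section
/- (Theorem 3) Let λ ∈ (0,1), let Ω(k) be a sequence of real symmetric n×n matrices, let P(k) be a sequence of real symmetric positive definite n×n matrices satisfying P(k+1) = (1/λ)·(P(k) − P(k)Ω(k)N(k)⁻¹Ω(k)P(k)) where N(k) = λ·I + Ω(k)P(k)Ω(k), and let θ̃(k) ∈ ℝⁿ satisfy θ̃(k+1) = (I − P(k)Ω(k)N(k)⁻¹Ω(k))·θ̃(k). Suppose there exist k_e ∈ ℕ and constants α_R > 0, β_R > 0 such that α_R·I ≼ P(k)⁻¹ ≼ β_R·I for all k ≥ k_e. Then for all k ≥ k_e, ‖θ̃(k)‖² ≤ (β_R/α_R)·λ^{k−k_e}·‖θ̃(k_e)‖²; in particular the parameter error θ̃(k) converges to zero exponentially. -/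
/-!
`V k = θ̃ kᵀ P(k)⁻¹ θ̃ k` is a Lyapunov function. The covariance update says exactly that
the error map `1 - gain`, with gain `PΩN⁻¹Ω`, equals `λ P(k+1) P(k)⁻¹`, so
`P(k+1)⁻¹ θ̃(k+1) = λ P(k)⁻¹ θ̃ k`, and by symmetry of `P k`
`V (k+1) = λ (V k - θ̃ kᵀ Ω N⁻¹ Ω θ̃ k) ≤ λ V k`. Sandwiching `V` between `α_R ‖θ̃‖²` and
`β_R ‖θ̃‖²` turns the geometric decay of `V` into that of `‖θ̃‖²`.
-/

open Matrix

variable {ι : Type*} [Fintype ι]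

lemma posDef_smul_one_add_mul_mul [DecidableEq ι] {lam : ℝ} (hlam : 0 < lam)
    {Ω P : Matrix ι ι ℝ} (hΩ : Ω.IsHermitian) (hP : P.PosSemidef) :
    (lam • (1 : Matrix ι ι ℝ) + Ω * P * Ω).PosDef :=
  (PosDef.one.smul hlam).add_posSemidef <| by
    simpa only [hΩ.eq] using hP.mul_mul_conjTranspose_same Ω

lemma Matrix.PosDef.posSemidef_mul_inv_mul [DecidableEq ι] {N Ω : Matrix ι ι ℝ}
    (hN : N.PosDef) (hΩ : Ω.IsHermitian) : (Ω * N⁻¹ * Ω).PosSemidef := by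
  simpa only [hΩ.eq] using hN.inv.posSemidef.mul_mul_conjTranspose_same Ω

lemma Matrix.PosSemidef.dotProduct_mulVec_le {A B : Matrix ι ι ℝ} (h : (B - A).PosSemidef)
    (x : ι → ℝ) : x ⬝ᵥ A *ᵥ x ≤ x ⬝ᵥ B *ᵥ x := by
  have hnonneg := h.dotProduct_mulVec_nonneg x
  rw [star_trivial, sub_mulVec, dotProduct_sub] at hnonneg
  linarith

section RLS

variable [DecidableEq ι] {lam : ℝ} {P P' Ω N : Matrix ι ι ℝ}

lemma one_sub_gain_eq_smul_mul_inv (hlam : lam ≠ 0) (hP : IsUnit P.det)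
    (hrec : P' = lam⁻¹ • (P - P * Ω * N⁻¹ * Ω * P)) :
    1 - P * Ω * N⁻¹ * Ω = lam • (P' * P⁻¹) := by
  rw [hrec, smul_mul, smul_smul, mul_inv_cancel₀ hlam, one_smul, Matrix.sub_mul,
    mul_nonsing_inv _ hP, Matrix.mul_assoc _ P, mul_nonsing_inv _ hP, Matrix.mul_one]

lemma inv_mulVec_one_sub_gain_mulVec (hlam : lam ≠ 0) (hP : IsUnit P.det)
    (hP' : IsUnit P'.det) (hrec : P' = lam⁻¹ • (P - P * Ω * N⁻¹ * Ω * P)) (θ : ι → ℝ) :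
    P'⁻¹ *ᵥ ((1 - P * Ω * N⁻¹ * Ω) *ᵥ θ) = lam • (P⁻¹ *ᵥ θ) := by
  rw [one_sub_gain_eq_smul_mul_inv hlam hP hrec, mulVec_mulVec, Matrix.mul_smul,
    ← Matrix.mul_assoc, nonsing_inv_mul _ hP', Matrix.one_mul, smul_mulVec]

lemma rls_lyapunov_step_eq (hlam : lam ≠ 0) (hPs : P.IsHermitian) (hP : IsUnit P.det)
    (hP' : IsUnit P'.det) (hrec : P' = lam⁻¹ • (P - P * Ω * N⁻¹ * Ω * P))
    {θ θ' : ι → ℝ} (hθ : θ' = (1 - P * Ω * N⁻¹ * Ω) *ᵥ θ) :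
    θ' ⬝ᵥ P'⁻¹ *ᵥ θ' = lam * (θ ⬝ᵥ P⁻¹ *ᵥ θ - θ ⬝ᵥ (Ω * N⁻¹ * Ω) *ᵥ θ) := by
  have hsymm : ∀ x, (P *ᵥ x) ⬝ᵥ P⁻¹ *ᵥ θ = x ⬝ᵥ θ := fun x => by
    rw [dotProduct_comm, dotProduct_mulVec, ← mulVec_transpose,
      ← conjTranspose_eq_transpose_of_trivial, hPs.eq, mulVec_mulVec, mul_nonsing_inv _ hP,
      one_mulVec, dotProduct_comm]
  rw [hθ, inv_mulVec_one_sub_gain_mulVec hlam hP hP' hrec, dotProduct_smul, smul_eq_mul,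
    sub_mulVec, one_mulVec, sub_dotProduct, Matrix.mul_assoc, Matrix.mul_assoc, ← mulVec_mulVec,
    hsymm, dotProduct_comm _ θ, Matrix.mul_assoc Ω]

lemma rls_lyapunov_step_le (hlam : 0 < lam) (hΩ : Ω.IsHermitian) (hP : P.PosDef)
    (hP' : IsUnit P'.det) (hN : N.PosDef) (hrec : P' = lam⁻¹ • (P - P * Ω * N⁻¹ * Ω * P))
    {θ θ' : ι → ℝ} (hθ : θ' = (1 - P * Ω * N⁻¹ * Ω) *ᵥ θ) :
    θ' ⬝ᵥ P'⁻¹ *ᵥ θ' ≤ lam * (θ ⬝ᵥ P⁻¹ *ᵥ θ) := by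
  rw [rls_lyapunov_step_eq hlam.ne' hP.isHermitian hP.det_pos.ne'.isUnit hP' hrec hθ]
  have hgain := (hN.posSemidef_mul_inv_mul hΩ).dotProduct_mulVec_nonneg θ
  rw [star_trivial] at hgain
  exact mul_le_mul_of_nonneg_left (sub_le_self _ hgain) hlam.le

end RLS

theorem parameter_error_exponential_stability_general {n : ℕ}
    (lam : ℝ) (hlam0 : 0 < lam)
    (Ω P : ℕ → Matrix (Fin n) (Fin n) ℝ)
    (hΩ : ∀ k, (Ω k).IsHermitian) (hP : ∀ k, (P k).PosDef)
    (N : ℕ → Matrix (Fin n) (Fin n) ℝ)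
    (hN : ∀ k, N k = lam • (1 : Matrix (Fin n) (Fin n) ℝ) + Ω k * P k * Ω k)
    (hPrec : ∀ k, P (k + 1) = lam⁻¹ • (P k - P k * Ω k * (N k)⁻¹ * Ω k * P k))
    (θtil : ℕ → (Fin n → ℝ))
    (hθrec : ∀ k, θtil (k + 1)
      = ((1 : Matrix (Fin n) (Fin n) ℝ) - P k * Ω k * (N k)⁻¹ * Ω k) *ᵥ θtil k)
    (k_e : ℕ) (αR βR : ℝ) (hαR : 0 < αR)
    (hlow : ∀ k ≥ k_e,
      Matrix.PosSemidef ((P k)⁻¹ - αR • (1 : Matrix (Fin n) (Fin n) ℝ)))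
    (hup : ∀ k ≥ k_e,
      Matrix.PosSemidef (βR • (1 : Matrix (Fin n) (Fin n) ℝ) - (P k)⁻¹)) :
    ∀ k ≥ k_e, θtil k ⬝ᵥ θtil k
      ≤ (βR / αR) * lam ^ (k - k_e) * (θtil k_e ⬝ᵥ θtil k_e) := by
  set V : ℕ → ℝ := fun k => θtil k ⬝ᵥ (P k)⁻¹ *ᵥ θtil k
  have hstep (k : ℕ) : V (k + 1) ≤ lam * V k :=
    rls_lyapunov_step_le hlam0 (hΩ k) (hP k) (hP (k + 1)).det_pos.ne'.isUnit
      (hN k ▸ posDef_smul_one_add_mul_mul hlam0 (hΩ k) (hP k).posSemidef) (hPrec k) (hθrec k)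
  intro k hk
  obtain ⟨m, rfl⟩ := Nat.exists_eq_add_of_le hk
  have hdecay : V (k_e + m) ≤ lam ^ m * V k_e :=
    le_geom (u := fun i => V (k_e + i)) hlam0.le m fun i _ => hstep (k_e + i)
  have hlower := (hlow (k_e + m) hk).dotProduct_mulVec_le (θtil (k_e + m))
  have hupper := (hup k_e le_rfl).dotProduct_mulVec_le (θtil k_e)
  simp only [smul_mulVec, one_mulVec, dotProduct_smul, smul_eq_mul] at hlower hupper
  rw [Nat.add_sub_cancel_left, div_mul_eq_mul_div, div_mul_eq_mul_div, le_div_iff₀' hαR]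
  calc αR * (θtil (k_e + m) ⬝ᵥ θtil (k_e + m)) ≤ lam ^ m * V k_e := hlower.trans hdecay
    _ ≤ lam ^ m * (βR * (θtil k_e ⬝ᵥ θtil k_e)) := by gcongr
    _ = βR * lam ^ m * (θtil k_e ⬝ᵥ θtil k_e) := by ring

/-- (Theorem 3) Global exponential stability of the parameter error: under the stated
RLS recursions, if `α_R I ≼ P(k)⁻¹ ≼ β_R I` for all `k ≥ k_e`, then
`‖θ̃(k)‖² ≤ (β_R/α_R) λ^{k−k_e} ‖θ̃(k_e)‖²` for all `k ≥ k_e`; in particular the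
parameter error converges to zero exponentially. -/
theorem parameter_error_exponential_stability {n : ℕ}
    (lam : ℝ) (hlam0 : 0 < lam) (hlam1 : lam < 1)
    (Ω P : ℕ → Matrix (Fin n) (Fin n) ℝ)
    (hΩ : ∀ k, (Ω k).IsHermitian) (hP : ∀ k, (P k).PosDef)
    (N : ℕ → Matrix (Fin n) (Fin n) ℝ)
    (hN : ∀ k, N k = lam • (1 : Matrix (Fin n) (Fin n) ℝ) + Ω k * P k * Ω k)
    (hPrec : ∀ k, P (k + 1) = lam⁻¹ • (P k - P k * Ω k * (N k)⁻¹ * Ω k * P k))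
    (θtil : ℕ → (Fin n → ℝ))
    (hθrec : ∀ k, θtil (k + 1)
      = ((1 : Matrix (Fin n) (Fin n) ℝ) - P k * Ω k * (N k)⁻¹ * Ω k) *ᵥ θtil k)
    (k_e : ℕ) (αR βR : ℝ) (hαR : 0 < αR) (hβR : 0 < βR)
    (hlow : ∀ k ≥ k_e,
      Matrix.PosSemidef ((P k)⁻¹ - αR • (1 : Matrix (Fin n) (Fin n) ℝ)))
    (hup : ∀ k ≥ k_e,
      Matrix.PosSemidef (βR • (1 : Matrix (Fin n) (Fin n) ℝ) - (P k)⁻¹)) :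
    ∀ k ≥ k_e, θtil k ⬝ᵥ θtil k
      ≤ (βR / αR) * lam ^ (k - k_e) * (θtil k_e ⬝ᵥ θtil k_e) :=
  parameter_error_exponential_stability_general lam hlam0 Ω P hΩ hP N hN hPrec θtil hθrec k_e αR βR
    hαR hlow hup
end
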